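/- Let s and k be integers with 2 ≤ k ≤ s−2. For every ε > 0 there exists n₀ such that for all n ≥ n₀: if G is a K_s-saturated graph on n vertices with N(M_k, G) = sat(n, M_k, K_s), then G has at least (1−ε)·C(n, k) independent sets of size k. -/

import Mathlib

/-- `sGraph n k` is the join `S_{n,k}` of the complete graph `K_k` with the empty graph on
`n - k` vertices: the first `k` vertices of `Fin n` form a clique joined to the rest. -/
def sGraph (n k : ℕ) : SimpleGraph (Fin n) where
  Adj i j := i ≠ j ∧ ((i : ℕ) < k ∨ (j : ℕ) < k)
  symm := ⟨fun i j h => ⟨h.1.symm, h.2.symm⟩⟩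
  loopless := ⟨fun i h => h.1 rfl⟩

/-- `G` is `K_s`-saturated: `G` has no `K_s` subgraph, but adding any edge between two
distinct nonadjacent vertices creates one. -/
def IsKSat {V : Type*} (G : SimpleGraph V) (s : ℕ) : Prop :=
  G.CliqueFree s ∧
    ∀ u v : V, u ≠ v → ¬ G.Adj u v →
      ¬ (G ⊔ SimpleGraph.fromEdgeSet {s(u, v)}).CliqueFree s

/-- `numMatchings G k` is the number of copies of `M_k` in `G`, i.e. the number of
`k`-element sets of pairwise disjoint edges of `G`. -/
noncomputable def numMatchings {V : Type*} (G : SimpleGraph V) (k : ℕ) : ℕ :=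
  Set.ncard {M : Finset (Sym2 V) | M.card = k ∧ (∀ e ∈ M, e ∈ G.edgeSet) ∧
    ∀ e ∈ M, ∀ f ∈ M, e ≠ f → ∀ v, v ∈ e → v ∉ f}

/-- `satM n k s` is the minimum number of copies of `M_k` over all `K_s`-saturated graphs
on `n` vertices. -/
noncomputable def satM (n k s : ℕ) : ℕ :=
  sInf {m | ∃ G : SimpleGraph (Fin n), IsKSat G s ∧ numMatchings G k = m}

/-- `numIndepSets G ℓ` is the number of independent sets of size `ℓ` in `G`. -/
noncomputable def numIndepSets {V : Type*} (G : SimpleGraph V) (ℓ : ℕ) : ℕ :=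
  Set.ncard {t : Finset V | t.card = ℓ ∧ ∀ v ∈ t, ∀ w ∈ t, ¬ G.Adj v w}

/-- `numCliques G r` is the number of copies of `K_r` in `G`, i.e. the number of
`r`-element vertex subsets inducing a complete graph. -/
noncomputable def numCliques {V : Type*} (G : SimpleGraph V) (r : ℕ) : ℕ :=
  Set.ncard {t : Finset V | t.card = r ∧ G.IsClique (t : Set V)}

/-!
The join `sGraph n (s - 2)` of `K_{s-2}` with an independent set is `K_s`-saturated and has at
most `(s - 2) n` edges, hence at most `((s - 2) n)^k` copies of `M_k`. Conversely, extending
matchings greedily, a graph with `m` edges on `n` vertices has at least `(m - 2kn)^k / k!` copies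
of `M_k`; so an extremal graph has `O(n)` edges. A `k`-set that is not independent is an edge plus
`k - 2` further vertices, so there are at most `O(n) · C(n, k - 2) = o(C(n, k))` of them.
-/

open Finset Filter Asymptotics

namespace SimpleGraph

variable {V : Type*} [Fintype V] [DecidableEq V] (G : SimpleGraph V) [DecidableRel G.Adj]

def matchingFinset (k : ℕ) : Finset (Finset (Sym2 V)) :=
  {M ∈ G.edgeFinset.powersetCard k | ∀ e ∈ M, ∀ f ∈ M, e ≠ f → ∀ v ∈ e, v ∉ f}

variable {G} in
lemma mem_matchingFinset {k : ℕ} {M : Finset (Sym2 V)} :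
    M ∈ G.matchingFinset k ↔
      (M ⊆ G.edgeFinset ∧ #M = k) ∧ ∀ e ∈ M, ∀ f ∈ M, e ≠ f → ∀ v ∈ e, v ∉ f := by
  rw [matchingFinset, mem_filter, mem_powersetCard]

lemma numMatchings_eq_card_matchingFinset (k : ℕ) :
    numMatchings G k = #(G.matchingFinset k) := by
  rw [numMatchings, ← Set.ncard_coe_finset]
  congr 1
  ext M
  simp only [Set.mem_ofPred_eq, mem_coe, mem_matchingFinset, subset_iff, mem_edgeFinset]
  tauto

lemma numIndepSets_eq_card_indepSetFinset (k : ℕ) :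
    numIndepSets G k = #(G.indepSetFinset k) := by
  rw [numIndepSets, ← Set.ncard_coe_finset]
  congr 1
  ext t
  simp only [Set.mem_ofPred_eq, mem_indepSetFinset_iff, isNIndepSet_iff,
    isIndepSet_iff, Set.Pairwise, mem_coe]
  exact ⟨fun ⟨hc, h⟩ => ⟨fun v hv w hw _ => h v hv w hw, hc⟩,
    fun ⟨h, hc⟩ => ⟨hc, fun v hv w hw hvw => h hv hw hvw.ne hvw⟩⟩

lemma choose_le_card_indepSetFinset_add (k : ℕ) :
    (Fintype.card V).choose k ≤
      #(G.indepSetFinset k) + #G.edgeFinset * (Fintype.card V).choose (k - 2) := by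
  have hcover : (univ : Finset V).powersetCard k ⊆ G.indepSetFinset k ∪
      (G.edgeFinset ×ˢ (univ : Finset V).powersetCard (k - 2)).image
        (fun p => p.1.toFinset ∪ p.2) := by
    intro t ht
    rw [mem_powersetCard] at ht
    by_cases hind : G.IsIndepSet (t : Set V)
    · exact mem_union_left _ (mem_indepSetFinset_iff.2 ⟨hind, ht.2⟩)
    · obtain ⟨v, hv, w, hw, -, hvw⟩ : ∃ v ∈ t, ∃ w ∈ t, v ≠ w ∧ G.Adj v w := by
        simpa [isIndepSet_iff, Set.Pairwise] using hind
      have hsub : ({v, w} : Finset V) ⊆ t := insert_subset hv (singleton_subset_iff.2 hw)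
      refine mem_union_right _ (mem_image.2 ⟨(s(v, w), t \ {v, w}), ?_, ?_⟩)
      · refine mem_product.2 ⟨G.mem_edgeFinset.2 hvw, mem_powersetCard.2 ⟨subset_univ _, ?_⟩⟩
        rw [card_sdiff_of_subset hsub, ht.2, card_pair hvw.ne]
      · simp only [Sym2.toFinset_mk_eq, union_sdiff_of_subset hsub]
  calc (Fintype.card V).choose k = #((univ : Finset V).powersetCard k) := by
        rw [card_powersetCard, card_univ]
    _ ≤ _ := (card_le_card hcover).trans (card_union_le _ _)
    _ ≤ _ := Nat.add_le_add_left (card_image_le.trans_eq (by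
        rw [card_product, card_powersetCard, card_univ])) _

lemma card_filter_edgeFinset_exists_mem_le (S : Finset V) :
    #{e ∈ G.edgeFinset | ∃ v ∈ S, v ∈ e} ≤ #S * Fintype.card V := by
  calc #{e ∈ G.edgeFinset | ∃ v ∈ S, v ∈ e} ≤ #(S.biUnion fun v => G.incidenceFinset v) := by
        refine card_le_card fun e he => ?_
        obtain ⟨he, v, hv, hve⟩ := mem_filter.1 he
        exact mem_biUnion.2 ⟨v, hv, (G.mem_incidenceFinset v e).2 ⟨G.mem_edgeFinset.1 he, hve⟩⟩
    _ ≤ ∑ v ∈ S, #(G.incidenceFinset v) := card_biUnion_le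
    _ ≤ ∑ _v ∈ S, Fintype.card V := sum_le_sum fun v _ =>
        (G.card_incidenceFinset_eq_degree v).trans_le (G.degree_lt_card_verts v).le
    _ = #S * Fintype.card V := by rw [sum_const, smul_eq_mul]

lemma card_edgeFinset_sub_le_card_filter_disjoint (M : Finset (Sym2 V)) :
    #G.edgeFinset - 2 * #M * Fintype.card V ≤
      #{e ∈ G.edgeFinset | ∀ f ∈ M, ∀ v ∈ f, v ∉ e} := by
  have hverts : #(M.biUnion Sym2.toFinset) ≤ 2 * #M :=
    calc #(M.biUnion Sym2.toFinset) ≤ ∑ f ∈ M, #f.toFinset := card_biUnion_le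
      _ ≤ ∑ _f ∈ M, 2 := sum_le_sum fun f _ => by rw [Sym2.card_toFinset]; split_ifs <;> omega
      _ = 2 * #M := by rw [sum_const, smul_eq_mul, mul_comm]
  have hmeets : #{e ∈ G.edgeFinset | ¬ ∀ f ∈ M, ∀ v ∈ f, v ∉ e} ≤ 2 * #M * Fintype.card V := by
    refine (card_le_card fun e he => ?_).trans
      ((G.card_filter_edgeFinset_exists_mem_le _).trans (Nat.mul_le_mul_right _ hverts))
    simp only [mem_filter, not_forall, not_not] at he ⊢
    obtain ⟨he, f, hf, v, hvf, hve⟩ := he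
    exact ⟨he, v, mem_biUnion.2 ⟨f, hf, Sym2.mem_toFinset.2 hvf⟩, hve⟩
  have := card_filter_add_card_filter_not (s := G.edgeFinset) (fun e => ∀ f ∈ M, ∀ v ∈ f, v ∉ e)
  omega

variable {G} in
lemma insert_mem_matchingFinset {j : ℕ} {M : Finset (Sym2 V)} (hM : M ∈ G.matchingFinset j)
    {e : Sym2 V} (he : e ∈ {e ∈ G.edgeFinset | ∀ f ∈ M, ∀ v ∈ f, v ∉ e}) :
    insert e M ∈ G.matchingFinset (j + 1) ∧ e ∉ M := by
  obtain ⟨⟨hME, hMcard⟩, hMdisj⟩ := mem_matchingFinset.1 hM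
  obtain ⟨heE, hedisj⟩ := mem_filter.1 he
  have heM : e ∉ M := fun h => hedisj e h _ (Sym2.out_fst_mem e) (Sym2.out_fst_mem e)
  refine ⟨mem_matchingFinset.2
    ⟨⟨insert_subset heE hME, by rw [card_insert_of_notMem heM, hMcard]⟩, ?_⟩, heM⟩
  simp only [mem_insert]
  rintro f (rfl | hf) g (rfl | hg) hfg v hv
  · exact absurd rfl hfg
  · exact fun hvg => hedisj g hg v hvg hv
  · exact hedisj f hf v hv
  · exact hMdisj f hf g hg hfg v hv

/-- Double counting pairs `M' ⊆ M` of matchings of sizes `j` and `j + 1`: each `M'` extends by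
any edge disjoint from it, and each `M` has `j + 1` such subsets. -/
lemma card_matchingFinset_mul_le (j : ℕ) :
    #(G.matchingFinset j) * (#G.edgeFinset - 2 * j * Fintype.card V) ≤
      #(G.matchingFinset (j + 1)) * (j + 1) := by
  refine card_mul_le_card_mul (fun M' M => M' ⊆ M) (fun M' hM' => ?_) (fun M hM => ?_)
  · obtain ⟨⟨-, hcard⟩, -⟩ := mem_matchingFinset.1 hM'
    refine ((G.card_edgeFinset_sub_le_card_filter_disjoint M').trans_eq' (by rw [hcard])).trans
      (card_le_card_of_injOn (insert · M') (fun e he => ?_) (fun e he e' he' h => ?_))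
    · exact mem_filter.2 ⟨(insert_mem_matchingFinset hM' he).1, subset_insert _ _⟩
    · have heM := (insert_mem_matchingFinset hM' he).2
      have h : insert e M' = insert e' M' := h
      have : e ∈ insert e' M' := h ▸ mem_insert_self e M'
      exact (mem_insert.1 this).resolve_right heM
  · obtain ⟨⟨-, hcard⟩, -⟩ := mem_matchingFinset.1 hM
    calc #{M' ∈ G.matchingFinset j | M' ⊆ M} ≤ #(M.powersetCard j) := card_le_card fun M' h => by
          obtain ⟨hM', hsub⟩ := mem_filter.1 h
          exact mem_powersetCard.2 ⟨hsub, (mem_matchingFinset.1 hM').1.2⟩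
      _ = j + 1 := by rw [card_powersetCard, hcard, Nat.choose_succ_self_right]

lemma matchingFinset_zero : G.matchingFinset 0 = {∅} := by
  simp [matchingFinset]

lemma card_edgeFinset_sub_pow_le (k : ℕ) :
    (#G.edgeFinset - 2 * k * Fintype.card V) ^ k ≤ #(G.matchingFinset k) * k.factorial := by
  set c := #G.edgeFinset - 2 * k * Fintype.card V
  suffices ∀ j ≤ k, c ^ j ≤ #(G.matchingFinset j) * j.factorial from this k le_rfl
  intro j hj
  induction j with
  | zero => simp [matchingFinset_zero]
  | succ j ih =>
    have hc : c ≤ #G.edgeFinset - 2 * j * Fintype.card V :=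
      Nat.sub_le_sub_left (Nat.mul_le_mul_right _ (by omega)) _
    calc c ^ (j + 1) = c ^ j * c := pow_succ c j
      _ ≤ #(G.matchingFinset j) * j.factorial * (#G.edgeFinset - 2 * j * Fintype.card V) :=
          Nat.mul_le_mul (ih (by omega)) hc
      _ = #(G.matchingFinset j) * (#G.edgeFinset - 2 * j * Fintype.card V) * j.factorial := by
          ring
      _ ≤ #(G.matchingFinset (j + 1)) * (j + 1) * j.factorial :=
          Nat.mul_le_mul_right _ (G.card_matchingFinset_mul_le j)
      _ = #(G.matchingFinset (j + 1)) * (j + 1).factorial := by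
          rw [Nat.factorial_succ]; ring

lemma card_matchingFinset_le_pow (k : ℕ) : #(G.matchingFinset k) ≤ #G.edgeFinset ^ k :=
  calc #(G.matchingFinset k) ≤ #(G.edgeFinset.powersetCard k) := card_filter_le _ _
    _ = (#G.edgeFinset).choose k := card_powersetCard _ _
    _ ≤ #G.edgeFinset ^ k := Nat.choose_le_pow _ _

lemma card_edgeFinset_le_of_numMatchings_le {W : Type*} [Fintype W] [DecidableEq W]
    (H : SimpleGraph W) [DecidableRel H.Adj] {k : ℕ} (hk : 0 < k)
    (h : numMatchings G k ≤ numMatchings H k) :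
    #G.edgeFinset ≤ k * #H.edgeFinset + 2 * k * Fintype.card V := by
  rw [numMatchings_eq_card_matchingFinset, numMatchings_eq_card_matchingFinset] at h
  have : (#G.edgeFinset - 2 * k * Fintype.card V) ^ k ≤ (k * #H.edgeFinset) ^ k :=
    calc _ ≤ #(G.matchingFinset k) * k.factorial := G.card_edgeFinset_sub_pow_le k
      _ ≤ #H.edgeFinset ^ k * k ^ k :=
          Nat.mul_le_mul (h.trans (H.card_matchingFinset_le_pow k)) (Nat.factorial_le_pow k)
      _ = (k * #H.edgeFinset) ^ k := by rw [mul_pow, mul_comm]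
  have := (Nat.pow_le_pow_iff_left hk.ne').1 this
  omega

end SimpleGraph

open SimpleGraph

section sGraph

variable {n : ℕ}

@[simp]
lemma sGraph_adj {c : ℕ} {i j : Fin n} :
    (sGraph n c).Adj i j ↔ i ≠ j ∧ ((i : ℕ) < c ∨ (j : ℕ) < c) :=
  Iff.rfl

lemma card_edgeFinset_sGraph_le (c : ℕ) [DecidableRel (sGraph n c).Adj] :
    #(sGraph n c).edgeFinset ≤ c * n := by
  have hsub : (sGraph n c).edgeFinset ⊆
      (({i | (i : ℕ) < c} : Finset (Fin n)) ×ˢ univ).image fun p => s(p.1, p.2) := by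
    intro e he
    induction e with
    | _ a b =>
      obtain ⟨-, ha | hb⟩ := (sGraph n c).mem_edgeFinset.1 he
      · exact mem_image.2 ⟨(a, b), by simp [ha], rfl⟩
      · exact mem_image.2 ⟨(b, a), by simp [hb], Sym2.eq_swap⟩
  calc #(sGraph n c).edgeFinset ≤ #(({i | (i : ℕ) < c} : Finset (Fin n)) ×ˢ univ) :=
        (card_le_card hsub).trans card_image_le
    _ = min n c * n := by rw [card_product, Fin.card_filter_val_lt, card_univ, Fintype.card_fin]
    _ ≤ c * n := Nat.mul_le_mul_right _ (min_le_right _ _)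

lemma sGraph_cliqueFree {c : ℕ} : (sGraph n c).CliqueFree (c + 2) := by
  rintro t ⟨hclique, hcard⟩
  have hlow : #{i ∈ t | i.val < c} ≤ c :=
    (card_le_card (filter_subset_filter _ (subset_univ t))).trans
      (Fin.card_filter_val_lt.trans_le (min_le_right _ _))
  have := card_filter_add_card_filter_not (s := t) (fun i : Fin n => (i : ℕ) < c)
  obtain ⟨u, hu, v, hv, huv⟩ := one_lt_card.1 (show 1 < #{i ∈ t | ¬ i.val < c} by omega)
  rw [mem_filter] at hu hv
  obtain ⟨-, h | h⟩ := hclique hu.1 hv.1 huv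
  exacts [hu.2 h, hv.2 h]

/-- Two nonadjacent vertices of `sGraph n c` lie outside the clique `{i | i < c}`, so joining
them creates a clique on `c + 2` vertices. -/
lemma sGraph_isKSat (c : ℕ) : IsKSat (sGraph n c) (c + 2) := by
  classical
  refine ⟨sGraph_cliqueFree, fun u v huv hnadj hfree => ?_⟩
  simp only [sGraph_adj, not_and, not_or, not_lt] at hnadj
  obtain ⟨hu, hv⟩ := hnadj huv
  set F : Finset (Fin n) := {i | (i : ℕ) < c}
  have hF : ∀ i ∈ F, (i : ℕ) < c := fun i hi => (mem_filter.1 hi).2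
  have hFcard : #F = c := by
    rw [Fin.card_filter_val_lt]; have := u.isLt; omega
  have huF : u ∉ insert v F := by
    simp only [mem_insert, not_or]; exact ⟨huv, fun h => (hF u h).not_ge hu⟩
  have hvF : v ∉ F := fun h => (hF v h).not_ge hv
  refine hfree (insert u (insert v F)) ⟨?_, by rw [card_insert_of_notMem huF,
    card_insert_of_notMem hvF, hFcard]⟩
  have hFclique : ∀ w, ∀ i ∈ F, w ≠ i → (sGraph n c ⊔ fromEdgeSet {s(u, v)}).Adj w i :=
    fun w i hi hwi => Or.inl ⟨hwi, Or.inr (hF i hi)⟩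
  rw [coe_insert, coe_insert, isClique_insert, isClique_insert]
  refine ⟨⟨fun i hi j hj hij => hFclique i j hj hij, fun i hi hvi => hFclique v i hi hvi⟩,
    fun i hi hui => ?_⟩
  rcases Set.mem_insert_iff.1 hi with rfl | hi
  · exact Or.inr ⟨rfl, huv⟩
  · exact hFclique u i hi hui

end sGraph

lemma isLittleO_pow_pred_choose {k : ℕ} (hk : 0 < k) :
    (fun n : ℕ => (n : ℝ) ^ (k - 1)) =o[atTop] (fun n : ℕ => (n.choose k : ℝ)) :=
  ((isLittleO_pow_pow_atTop_of_lt (by omega : k - 1 < k)).comp_tendsto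
    tendsto_natCast_atTop_atTop).trans_isBigO (isTheta_choose k).symm.isBigO

/-- For `2 ≤ k ≤ s - 2`, every extremal `K_s`-saturated graph on `n` vertices has
`(1 - o(1))·C(n,k)` independent sets of size `k`. -/
theorem stmt_14 (s k : ℕ) (hk : 2 ≤ k) (hks : k ≤ s - 2) (ε : ℝ) (hε : 0 < ε) :
    ∃ n₀ : ℕ, ∀ n ≥ n₀, ∀ G : SimpleGraph (Fin n),
      IsKSat G s → numMatchings G k = satM n k s →
      (1 - ε) * (n.choose k : ℝ) ≤ (numIndepSets G k : ℝ) := by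
  classical
  set B := k * (s - 2) + 2 * k
  obtain ⟨n₀, hn₀⟩ := eventually_atTop.1
    (((isLittleO_pow_pred_choose (by omega : 0 < k)).const_mul_left (B : ℝ)).def hε)
  refine ⟨n₀, fun n hn G _ hG => ?_⟩
  have hsat : IsKSat (sGraph n (s - 2)) s := by
    simpa only [Nat.sub_add_cancel (by omega : 2 ≤ s)] using sGraph_isKSat (n := n) (s - 2)
  have hedges : #G.edgeFinset ≤ B * n := by
    have hG := G.card_edgeFinset_le_of_numMatchings_le (sGraph n (s - 2)) (by omega : 0 < k)
      (hG.trans_le (Nat.sInf_le ⟨_, hsat, rfl⟩))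
    rw [Fintype.card_fin] at hG
    calc #G.edgeFinset ≤ k * #(sGraph n (s - 2)).edgeFinset + 2 * k * n := hG
      _ ≤ k * ((s - 2) * n) + 2 * k * n := by gcongr; exact card_edgeFinset_sGraph_le _
      _ = B * n := by ring
  have hindep : n.choose k ≤ numIndepSets G k + B * n ^ (k - 1) := by
    have h := G.choose_le_card_indepSetFinset_add k
    rw [Fintype.card_fin, ← numIndepSets_eq_card_indepSetFinset] at h
    calc n.choose k ≤ numIndepSets G k + B * n * n ^ (k - 2) := by
          grw [h, hedges, Nat.choose_le_pow n (k - 2)]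
      _ = numIndepSets G k + B * n ^ (k - 1) := by
          rw [mul_assoc, ← pow_succ', show k - 2 + 1 = k - 1 by omega]
  have hsmall := hn₀ n hn
  rw [Real.norm_of_nonneg (by positivity), Real.norm_of_nonneg (by positivity)] at hsmall
  have : (n.choose k : ℝ) ≤ numIndepSets G k + B * n ^ (k - 1) := by exact_mod_cast hindep
  linarith
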